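/- Let f:[a,b]→ℝ be continuous and Φ-convex, and suppose n²·Φ((b−a)/n) → 0 as n → ∞ and f is twice continuously differentiable on [a,b]. Then the classical Hermite–Hadamard inequality holds: f((a+b)/2) ≤ (1/(b−a))·∫_a^b f(x) dx ≤ (f(a)+f(b))/2. -/

import Mathlib

/-!
A Φ-convex function satisfies the midpoint inequality `2 f(x) ≤ f(x - h) + f(x + h) + 2 Φ(h)`.
If `f''(x) < 0` at an interior point, comparison with a quadratic gives
`f(x - h) + f(x + h) - 2 f(x) ≤ (f''(x) / 2) h²` for all small `h > 0`, so `Φ(h) ≥ c h²` with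
`c > 0`, which is incompatible with `n² Φ((b - a) / n) → 0`. Hence `f'' ≥ 0`, `f` is convex, and the
classical Hermite–Hadamard inequality follows by pairing `x` with its reflection `a + b - x`.
-/

open Set Filter Topology MeasureTheory intervalIntegral

def PhiConvexOn (s : Set ℝ) (Φ f : ℝ → ℝ) : Prop :=
  ∀ x ∈ s, ∀ y ∈ s, ∀ t ∈ Icc (0 : ℝ) 1, f (t * x + (1 - t) * y) ≤
    t * f x + (1 - t) * f y + t * Φ ((1 - t) * |y - x|) + (1 - t) * Φ (t * |y - x|)

theorem PhiConvexOn.two_mul_le_add {s : Set ℝ} {Φ f : ℝ → ℝ} (hf : PhiConvexOn s Φ f)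
    {x h : ℝ} (hh : 0 ≤ h) (hxh : x - h ∈ s) (hxh' : x + h ∈ s) :
    2 * f x ≤ f (x - h) + f (x + h) + 2 * Φ h := by
  have H := hf _ hxh _ hxh' (1 / 2) (by norm_num)
  rw [show x + h - (x - h) = 2 * h by ring, abs_of_nonneg (by linarith : 0 ≤ 2 * h),
    show (1 / 2 : ℝ) * (x - h) + (1 - 1 / 2) * (x + h) = x by ring,
    show (1 - 1 / 2 : ℝ) * (2 * h) = h by ring, show (1 / 2 : ℝ) * (2 * h) = h by ring] at H
  linarith

theorem add_sub_two_mul_le_of_deriv2_le {f f' f'' : ℝ → ℝ} {x h c : ℝ} (hh : 0 ≤ h)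
    (hf : ContinuousOn f (Icc (x - h) (x + h)))
    (hf' : ∀ y ∈ Ioo (x - h) (x + h), HasDerivAt f (f' y) y)
    (hf'' : ∀ y ∈ Ioo (x - h) (x + h), HasDerivAt f' (f'' y) y)
    (hc : ∀ y ∈ Ioo (x - h) (x + h), f'' y ≤ c) :
    f (x - h) + f (x + h) - 2 * f x ≤ c * h ^ 2 := by
  -- the claim is the midpoint inequality for the convex function `y ↦ c y² / 2 - f y`
  have hconv : ConvexOn ℝ (Icc (x - h) (x + h)) (fun y => c * y ^ 2 / 2 - f y) := by
    refine convexOn_of_hasDerivWithinAt2_nonneg (f' := fun y => c * y - f' y)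
      (f'' := fun y => c - f'' y) (convex_Icc _ _) (by fun_prop (disch := assumption))
      (fun y hy => ?_) (fun y hy => ?_) (fun y hy => ?_) <;> rw [interior_Icc] at hy
    · refine ((((hasDerivAt_pow 2 y).const_mul c).div_const 2).sub (hf' y hy)).hasDerivWithinAt
        |>.congr_deriv ?_
      ring
    · exact (((hasDerivAt_id y).const_mul c).sub (hf'' y hy)).hasDerivWithinAt.congr_deriv
        (by simp)
    · exact sub_nonneg.2 (hc y hy)
  have H := hconv.2 (left_mem_Icc.2 (by linarith : x - h ≤ x + h))
    (right_mem_Icc.2 (by linarith : x - h ≤ x + h)) (by norm_num : (0 : ℝ) ≤ 1 / 2)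
    (by norm_num : (0 : ℝ) ≤ 1 / 2) (by norm_num)
  simp only [smul_eq_mul] at H
  rw [show 1 / 2 * (x - h) + 1 / 2 * (x + h) = x by ring] at H
  nlinarith

theorem eventually_add_sub_two_mul_le_of_deriv2_lt {f f' f'' : ℝ → ℝ} {x c : ℝ}
    (hf' : ∀ᶠ y in 𝓝 x, HasDerivAt f (f' y) y) (hf'' : ∀ᶠ y in 𝓝 x, HasDerivAt f' (f'' y) y)
    (hcont : ContinuousAt f'' x) (hc : f'' x < c) :
    ∀ᶠ h in 𝓝[>] 0, f (x - h) + f (x + h) - 2 * f x ≤ c * h ^ 2 := by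
  obtain ⟨δ, hδ, hnear⟩ := Metric.eventually_nhds_iff.1
    (hf'.and (hf''.and (hcont.eventually (gt_mem_nhds hc))))
  filter_upwards [Ioo_mem_nhdsGT hδ] with h ⟨hh, hhδ⟩
  have hclose : ∀ y ∈ Icc (x - h) (x + h), dist y x < δ := fun y hy => by
    rw [Real.dist_eq, abs_lt]; constructor <;> linarith [hy.1, hy.2]
  have hclose' : ∀ y ∈ Ioo (x - h) (x + h), dist y x < δ :=
    fun y hy => hclose y (Ioo_subset_Icc_self hy)
  exact add_sub_two_mul_le_of_deriv2_le hh.le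
    (fun y hy => (hnear (hclose y hy)).1.continuousAt.continuousWithinAt)
    (fun y hy => (hnear (hclose' y hy)).1) (fun y hy => (hnear (hclose' y hy)).2.1)
    (fun y hy => (hnear (hclose' y hy)).2.2.le)

theorem PhiConvexOn.nonneg_of_hasDerivAt2 {s : Set ℝ} {Φ f f' f'' : ℝ → ℝ} {x : ℝ}
    (hf : PhiConvexOn s Φ f) (hs : s ∈ 𝓝 x)
    (hf' : ∀ᶠ y in 𝓝 x, HasDerivAt f (f' y) y) (hf'' : ∀ᶠ y in 𝓝 x, HasDerivAt f' (f'' y) y)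
    (hcont : ContinuousAt f'' x) (hΦ : ∀ ε > 0, ∃ᶠ h in 𝓝[>] 0, Φ h ≤ ε * h ^ 2) :
    0 ≤ f'' x := by
  by_contra! hneg
  have hmem : ∀ᶠ h in 𝓝[>] (0 : ℝ), 0 < h ∧ x - h ∈ s ∧ x + h ∈ s := by
    refine (eventually_mem_nhdsWithin).and (Eventually.filter_mono nhdsWithin_le_nhds ?_)
    exact (((continuous_const.sub continuous_id).tendsto' 0 x (by simp)).eventually hs).and
      (((continuous_const.add continuous_id).tendsto' 0 x (by simp)).eventually hs)
  have hdiff := eventually_add_sub_two_mul_le_of_deriv2_lt hf' hf'' hcont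
    (by linarith : f'' x < f'' x / 2)
  obtain ⟨h, hΦh, ⟨hh, hxh, hxh'⟩, hd⟩ :=
    ((hΦ (-f'' x / 8) (by linarith)).and_eventually (hmem.and hdiff)).exists
  have := hf.two_mul_le_add hh.le hxh hxh'
  nlinarith [mul_pos (neg_pos.2 hneg) (pow_pos hh 2)]

theorem PhiConvexOn.convexOn {s : Set ℝ} {Φ f : ℝ → ℝ} (hs : Convex ℝ s)
    (hf : PhiConvexOn s Φ f) (hC2 : ContDiffOn ℝ 2 f s)
    (hΦ : ∀ ε > 0, ∃ᶠ h in 𝓝[>] 0, Φ h ≤ ε * h ^ 2) : ConvexOn ℝ s f := by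
  have hC2' : ContDiffOn ℝ 2 f (interior s) := hC2.mono interior_subset
  have hC1 : ContDiffOn ℝ 1 (deriv f) (interior s) :=
    hC2'.deriv_of_isOpen isOpen_interior (by norm_num)
  have hf' : ∀ y ∈ interior s, HasDerivAt f (deriv f y) y := fun y hy =>
    ((hC2'.differentiableOn two_ne_zero).differentiableAt (isOpen_interior.mem_nhds hy)).hasDerivAt
  have hf'' : ∀ y ∈ interior s, HasDerivAt (deriv f) (deriv (deriv f) y) y := fun y hy =>
    ((hC1.differentiableOn one_ne_zero).differentiableAt (isOpen_interior.mem_nhds hy)).hasDerivAt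
  have hcont : ContinuousOn (deriv (deriv f)) (interior s) :=
    (hC1.deriv_of_isOpen (m := 0) isOpen_interior (by norm_num)).continuousOn
  refine convexOn_of_hasDerivWithinAt2_nonneg hs hC2.continuousOn
    (fun y hy => (hf' y hy).hasDerivWithinAt) (fun y hy => (hf'' y hy).hasDerivWithinAt)
    fun y hy => ?_
  have hnhds := isOpen_interior.mem_nhds hy
  exact hf.nonneg_of_hasDerivAt2 (mem_interior_iff_mem_nhds.1 hy) (eventually_of_mem hnhds hf')
    (eventually_of_mem hnhds hf'') (hcont.continuousAt hnhds) hΦ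

theorem frequently_le_mul_sq_of_tendsto_nat_sq_mul {Φ : ℝ → ℝ} {L : ℝ} (hL : 0 < L)
    (hlim : Tendsto (fun n : ℕ => (n : ℝ) ^ 2 * Φ (L / n)) atTop (𝓝 0)) :
    ∀ ε > 0, ∃ᶠ h in 𝓝[>] 0, Φ h ≤ ε * h ^ 2 := by
  intro ε hε
  have hseq : Tendsto (fun n : ℕ => L / n) atTop (𝓝[>] 0) :=
    tendsto_nhdsWithin_iff.2 ⟨tendsto_const_div_atTop_nhds_zero_nat L,
      (eventually_gt_atTop 0).mono fun n hn => div_pos hL (Nat.cast_pos.2 hn)⟩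
  refine hseq.frequently (Eventually.frequently ?_)
  filter_upwards [hlim.eventually (gt_mem_nhds (by positivity : 0 < ε * L ^ 2)),
    eventually_gt_atTop 0] with n hn hn0
  have hn0' : (0 : ℝ) < n := Nat.cast_pos.2 hn0
  rw [div_pow, mul_div_assoc', le_div_iff₀ (by positivity)]
  linarith

theorem ConvexOn.two_mul_map_midpoint_le_add_map_reflect {f : ℝ → ℝ} {a b x : ℝ}
    (hf : ConvexOn ℝ (Icc a b) f) (hx : x ∈ Icc a b) :
    2 * f ((a + b) / 2) ≤ f x + f (a + b - x) := by
  have hx' : a + b - x ∈ Icc a b := ⟨by linarith [hx.2], by linarith [hx.1]⟩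
  have H := hf.2 hx hx' (by norm_num : (0 : ℝ) ≤ 1 / 2) (by norm_num : (0 : ℝ) ≤ 1 / 2)
    (by norm_num)
  simp only [smul_eq_mul] at H
  rw [show 1 / 2 * x + 1 / 2 * (a + b - x) = (a + b) / 2 by ring] at H
  linarith

theorem ConvexOn.add_map_reflect_le_add_map {f : ℝ → ℝ} {a b x : ℝ}
    (hf : ConvexOn ℝ (Icc a b) f) (hx : x ∈ Icc a b) :
    f x + f (a + b - x) ≤ f a + f b := by
  have hab : a ≤ b := hx.1.trans hx.2
  rw [← segment_eq_Icc hab] at hx hf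
  obtain ⟨t, u, ht, hu, htu, rfl⟩ := hx
  have hreflect : a + b - (t • a + u • b) = u • a + t • b := by
    simp only [smul_eq_mul]; linear_combination -(a + b) * htu
  rw [hreflect]
  have H₁ := hf.2 (left_mem_segment ℝ a b) (right_mem_segment ℝ a b) ht hu htu
  have H₂ := hf.2 (left_mem_segment ℝ a b) (right_mem_segment ℝ a b) hu ht (by linarith)
  simp only [smul_eq_mul] at H₁ H₂ ⊢
  linear_combination H₁ + H₂ + (f a + f b) * htu

theorem ConvexOn.hermite_hadamard {f : ℝ → ℝ} {a b : ℝ} (hab : a < b)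
    (hf : ConvexOn ℝ (Icc a b) f) (hint : IntervalIntegrable f volume a b) :
    f ((a + b) / 2) ≤ (1 / (b - a)) * ∫ x in a..b, f x ∧
      (1 / (b - a)) * ∫ x in a..b, f x ≤ (f a + f b) / 2 := by
  have hint' : IntervalIntegrable (fun x => f (a + b - x)) volume a b := by
    simpa using (hint.comp_sub_left (a + b)).symm
  have hsum : ∫ x in a..b, (f x + f (a + b - x)) = 2 * ∫ x in a..b, f x := by
    rw [integral_add hint hint', integral_comp_sub_left]
    simp only [add_sub_cancel_left, add_sub_cancel_right]
    ring
  have hlow := integral_mono_on hab.le intervalIntegrable_const (hint.add hint')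
    fun x hx => hf.two_mul_map_midpoint_le_add_map_reflect hx
  have hup := integral_mono_on hab.le (hint.add hint') intervalIntegrable_const
    fun x hx => hf.add_map_reflect_le_add_map hx
  simp only [hsum, intervalIntegral.integral_const, smul_eq_mul] at hlow hup
  rw [one_div_mul_eq_div, le_div_iff₀ (sub_pos.2 hab), div_le_iff₀ (sub_pos.2 hab)]
  constructor <;> linarith

theorem phi_convex_hermite_hadamard_limit_general
    (a b : ℝ) (hab : a < b) (f Φ : ℝ → ℝ)
    (hconv : ∀ x ∈ Set.Icc a b, ∀ y ∈ Set.Icc a b, ∀ t ∈ Set.Icc (0:ℝ) 1, f (t * x + (1 - t) * y) ≤ t * f x + (1 - t) * f y + t * Φ ((1 - t) * |y - x|) + (1 - t) * Φ (t * |y - x|))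
    (hC2 : ContDiffOn ℝ 2 f (Set.Icc a b))
    (hlim : Filter.Tendsto (fun n : ℕ => (n : ℝ) ^ 2 * Φ ((b - a) / n))
      Filter.atTop (nhds 0)) :
    f ((a + b) / 2) ≤ (1 / (b - a)) * ∫ x in a..b, f x ∧
    (1 / (b - a)) * ∫ x in a..b, f x ≤ (f a + f b) / 2 := by
  have hconvex : ConvexOn ℝ (Set.Icc a b) f := PhiConvexOn.convexOn (convex_Icc a b) hconv hC2
    (frequently_le_mul_sq_of_tendsto_nat_sq_mul (sub_pos.2 hab) hlim)
  exact hconvex.hermite_hadamard hab (hC2.continuousOn.intervalIntegrable_of_Icc hab.le)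

theorem phi_convex_hermite_hadamard_limit
    (a b : ℝ) (hab : a < b) (f Φ : ℝ → ℝ)
    (hΦ : ∀ t ∈ Set.Icc (0 : ℝ) (b - a), 0 ≤ Φ t)
    (hconv : ∀ x ∈ Set.Icc a b, ∀ y ∈ Set.Icc a b, ∀ t ∈ Set.Icc (0:ℝ) 1, f (t * x + (1 - t) * y) ≤ t * f x + (1 - t) * f y + t * Φ ((1 - t) * |y - x|) + (1 - t) * Φ (t * |y - x|))
    (hC2 : ContDiffOn ℝ 2 f (Set.Icc a b))
    (hlim : Filter.Tendsto (fun n : ℕ => (n : ℝ) ^ 2 * Φ ((b - a) / n))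
      Filter.atTop (nhds 0)) :
    f ((a + b) / 2) ≤ (1 / (b - a)) * ∫ x in a..b, f x ∧
    (1 / (b - a)) * ∫ x in a..b, f x ≤ (f a + f b) / 2 :=
  phi_convex_hermite_hadamard_limit_general a b hab f Φ hconv hC2 hlim
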